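/- If the triple (H(1), ρ, δ̄) satisfies axiom A4 (the limit β̄(x, y) = lim_{ε→0⁺} δ̄_{ε⁻¹}(δ̄_ε(x)·δ̄_ε(y)) exists, uniformly for x, y in compact sets), then it also satisfies axiom A3: the limit lim_{ε→0⁺} (1/ε)·ρ(δ̄^u_ε(x), δ̄^u_ε(y)) exists uniformly for u, x, y in compact sets. -/

import Mathlib

/-- The Heisenberg group H(1) as a set: ℝ² × ℝ. -/
abbrev H : Type := (ℝ × ℝ) × ℝ

/-- Euclidean norm on ℝ². -/
noncomputable def enorm2 (x : ℝ × ℝ) : ℝ := Real.sqrt (x.1 ^ 2 + x.2 ^ 2)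

/-- Canonical symplectic form on ℝ². -/
def omega2 (x y : ℝ × ℝ) : ℝ := x.1 * y.2 - x.2 * y.1

/-- Heisenberg group operation. -/
def Hmul (p q : H) : H :=
  ((p.1.1 + q.1.1, p.1.2 + q.1.2), p.2 + q.2 + 2 * omega2 p.1 q.1)

/-- Heisenberg group inverse. -/
def Hinv (p : H) : H := ((-p.1.1, -p.1.2), -p.2)

/-- Neutral element. -/
def He : H := ((0, 0), 0)

/-- The gauge d₀(x,x̄) = max {‖x‖, √|x̄|}. -/
noncomputable def d0 (p : H) : ℝ := max (enorm2 p.1) (Real.sqrt |p.2|)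
/-- The function G(t) = k(t) + t², whose inverse is g. -/
def Ginv (k : ℝ → ℝ) (t : ℝ) : ℝ := k t + t ^ 2

/-- The gauge ρ₀(x,x̄) = max {‖x‖, g(|x̄|)}. -/
noncomputable def rho0 (g : ℝ → ℝ) (p : H) : ℝ := max (enorm2 p.1) (g |p.2|)

/-- The dilatations δ̄_ε(x,x̄) = (εx, sgn(x̄)·g⁻¹(ε·g(|x̄|))). -/
noncomputable def bdil (k g : ℝ → ℝ) (ε : ℝ) (p : H) : H :=
  ((ε * p.1.1, ε * p.1.2), Real.sign p.2 * Ginv k (ε * g |p.2|))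

/-- The usual anisotropic dilations δ_ε(x,x̄) = (εx, ε²x̄). -/
def hdil (ε : ℝ) (p : H) : H := ((ε * p.1.1, ε * p.1.2), ε ^ 2 * p.2)

/-! Left invariance of ρ and homogeneity of ρ₀ under δ̄ give
`(1/ε) ρ(δ̄^u_ε x, δ̄^u_ε y) = ρ₀(β̄_ε(x⁻¹u, u⁻¹y))`, so A3 holds with limit `ρ₀(β̄(x⁻¹u, u⁻¹y))`
as soon as ρ₀ is uniformly continuous. It is, because `|ρ₀ p - ρ₀ q| ≤ d₀(p - q)` for the
coordinatewise difference `p - q`: `g` inverts the convex `G(t) = k(t) + t²` with `G(0) = 0`,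
so `g` is subadditive and `|g s - g t| ≤ g |s - t| ≤ √|s - t|`. -/

open Set

lemma enorm2_eq_norm (x : ℝ × ℝ) : enorm2 x = ‖(⟨x.1, x.2⟩ : ℂ)‖ := by
  rw [enorm2, Complex.norm_def, Complex.normSq_mk]
  ring_nf

lemma abs_enorm2_sub_enorm2_le (x y : ℝ × ℝ) : |enorm2 x - enorm2 y| ≤ enorm2 (x - y) := by
  simp only [enorm2_eq_norm]
  exact abs_norm_sub_norm_le (⟨x.1, x.2⟩ : ℂ) ⟨y.1, y.2⟩

lemma enorm2_smul {ε : ℝ} (hε : 0 ≤ ε) (a b : ℝ) :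
    enorm2 (ε * a, ε * b) = ε * enorm2 (a, b) := by
  rw [enorm2, enorm2, show (ε * a) ^ 2 + (ε * b) ^ 2 = ε ^ 2 * (a ^ 2 + b ^ 2) by ring,
    Real.sqrt_mul (sq_nonneg ε), Real.sqrt_sq hε]

lemma continuous_d0 : Continuous d0 := by
  unfold d0 enorm2
  fun_prop

lemma exists_pos_forall_norm_lt_d0_lt {η : ℝ} (hη : 0 < η) :
    ∃ δ > 0, ∀ r : H, ‖r‖ < δ → d0 r < η := by
  have hd0 : d0 0 = 0 := by simp [d0, enorm2]
  obtain ⟨δ, hδ, h⟩ := Metric.continuousAt_iff.1 continuous_d0.continuousAt η hη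
  refine ⟨δ, hδ, fun r hr => ?_⟩
  have := h (x := r) (by rwa [dist_zero_right])
  rw [hd0, Real.dist_eq, sub_zero] at this
  exact (le_abs_self _).trans_lt this

lemma ConvexOn.le_map_add_of_map_zero {f : ℝ → ℝ} (hf : ConvexOn ℝ (Ici 0) f) (h0 : f 0 = 0)
    {x y : ℝ} (hx : 0 ≤ x) (hy : 0 ≤ y) : f x + f y ≤ f (x + y) := by
  rcases (add_nonneg hx hy).eq_or_lt with hxy | hxy
  · obtain ⟨rfl, rfl⟩ : x = 0 ∧ y = 0 := ⟨by linarith, by linarith⟩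
    simp [h0]
  have hchord : ∀ t, 0 ≤ t → t ≤ x + y → f t ≤ t / (x + y) * f (x + y) := by
    intro t ht htxy
    have := hf.2 (mem_Ici.2 le_rfl) (mem_Ici.2 hxy.le)
      (show 0 ≤ 1 - t / (x + y) by rw [sub_nonneg, div_le_one hxy]; exact htxy)
      (show 0 ≤ t / (x + y) by positivity) (by ring)
    simp only [smul_eq_mul, mul_zero, zero_add, h0] at this
    rwa [div_mul_cancel₀ _ hxy.ne'] at this
  have hsum := add_le_add (hchord x hx (by linarith)) (hchord y hy (by linarith))
  rwa [← add_mul, ← add_div, div_self hxy.ne', one_mul] at hsum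

section Gauge

variable {k g : ℝ → ℝ}

lemma Ginv_nonneg (hk_nonneg : ∀ t ∈ Ici (0:ℝ), 0 ≤ k t) {s : ℝ} (hs : 0 ≤ s) :
    0 ≤ Ginv k s :=
  add_nonneg (hk_nonneg s hs) (sq_nonneg s)

lemma Ginv_strictMonoOn (hk_mono : StrictMonoOn k (Ici 0)) : StrictMonoOn (Ginv k) (Ici 0) :=
  fun _ hs _ ht hst => add_lt_add_of_lt_of_le (hk_mono hs ht hst) (pow_le_pow_left₀ hs hst.le 2)

lemma Ginv_le_Ginv_add (hk_conv : ConvexOn ℝ (Ici 0) k) (hk0 : k 0 = 0) {x y : ℝ}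
    (hx : 0 ≤ x) (hy : 0 ≤ y) : Ginv k x + Ginv k y ≤ Ginv k (x + y) := by
  have := hk_conv.le_map_add_of_map_zero hk0 hx hy
  unfold Ginv
  nlinarith [mul_nonneg hx hy]

lemma g_zero (hk0 : k 0 = 0) (hg_left : ∀ s ∈ Ici (0:ℝ), g (Ginv k s) = s) : g 0 = 0 := by
  simpa [Ginv, hk0] using hg_left 0 self_mem_Ici

lemma g_monotoneOn (hk_mono : StrictMonoOn k (Ici 0))
    (hg_right : ∀ t ∈ Ici (0:ℝ), 0 ≤ g t ∧ Ginv k (g t) = t) : MonotoneOn g (Ici 0) := by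
  intro s hs t ht hst
  rwa [← (Ginv_strictMonoOn hk_mono).le_iff_le (hg_right s hs).1 (hg_right t ht).1,
    (hg_right s hs).2, (hg_right t ht).2]

lemma g_le_sqrt (hk_nonneg : ∀ t ∈ Ici (0:ℝ), 0 ≤ k t)
    (hg_right : ∀ t ∈ Ici (0:ℝ), 0 ≤ g t ∧ Ginv k (g t) = t) {t : ℝ} (ht : 0 ≤ t) :
    g t ≤ √t := by
  refine (le_abs_self _).trans (Real.abs_le_sqrt ?_)
  have := hk_nonneg _ (hg_right t ht).1
  conv_rhs => rw [← (hg_right t ht).2, Ginv]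
  linarith

lemma g_add_le (hk_conv : ConvexOn ℝ (Ici 0) k) (hk_mono : StrictMonoOn k (Ici 0))
    (hk0 : k 0 = 0) (hg_left : ∀ s ∈ Ici (0:ℝ), g (Ginv k s) = s)
    (hg_right : ∀ t ∈ Ici (0:ℝ), 0 ≤ g t ∧ Ginv k (g t) = t) {s t : ℝ}
    (hs : 0 ≤ s) (ht : 0 ≤ t) : g (s + t) ≤ g s + g t := by
  obtain ⟨hgs, hGs⟩ := hg_right s hs
  obtain ⟨hgt, hGt⟩ := hg_right t ht
  have hsum : s + t ≤ Ginv k (g s + g t) := by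
    simpa only [hGs, hGt] using Ginv_le_Ginv_add hk_conv hk0 hgs hgt
  calc g (s + t) ≤ g (Ginv k (g s + g t)) :=
        g_monotoneOn hk_mono hg_right (add_nonneg hs ht) ((add_nonneg hs ht).trans hsum) hsum
    _ = g s + g t := hg_left _ (add_nonneg hgs hgt)

lemma abs_g_sub_g_le (hk_conv : ConvexOn ℝ (Ici 0) k) (hk_mono : StrictMonoOn k (Ici 0))
    (hk0 : k 0 = 0) (hg_left : ∀ s ∈ Ici (0:ℝ), g (Ginv k s) = s)
    (hg_right : ∀ t ∈ Ici (0:ℝ), 0 ≤ g t ∧ Ginv k (g t) = t) {s t : ℝ}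
    (hs : 0 ≤ s) (ht : 0 ≤ t) : |g s - g t| ≤ g |s - t| := by
  have hsub_le : ∀ s t : ℝ, 0 ≤ s → 0 ≤ t → g s - g t ≤ g |s - t| := fun s t hs ht => by
    have := g_monotoneOn hk_mono hg_right hs (add_nonneg ht (abs_nonneg _))
      (show s ≤ t + |s - t| by linarith [le_abs_self (s - t)])
    linarith [g_add_le hk_conv hk_mono hk0 hg_left hg_right ht (abs_nonneg (s - t))]
  exact abs_sub_le_iff.2 ⟨hsub_le s t hs ht, abs_sub_comm s t ▸ hsub_le t s ht hs⟩

lemma abs_rho0_sub_rho0_le_d0 (hk_conv : ConvexOn ℝ (Ici 0) k)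
    (hk_mono : StrictMonoOn k (Ici 0)) (hk0 : k 0 = 0)
    (hk_nonneg : ∀ t ∈ Ici (0:ℝ), 0 ≤ k t) (hg_left : ∀ s ∈ Ici (0:ℝ), g (Ginv k s) = s)
    (hg_right : ∀ t ∈ Ici (0:ℝ), 0 ≤ g t ∧ Ginv k (g t) = t) (p q : H) :
    |rho0 g p - rho0 g q| ≤ d0 (p - q) := by
  refine (abs_max_sub_max_le_max _ _ _ _).trans (max_le_max (abs_enorm2_sub_enorm2_le _ _) ?_)
  calc |(g |p.2| - g |q.2|)| ≤ g |(|p.2| - |q.2|)| :=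
        abs_g_sub_g_le hk_conv hk_mono hk0 hg_left hg_right (abs_nonneg _) (abs_nonneg _)
    _ ≤ √|(|p.2| - |q.2|)| := g_le_sqrt hk_nonneg hg_right (abs_nonneg _)
    _ ≤ √|(p - q).2| := Real.sqrt_le_sqrt (abs_abs_sub_abs_le_abs_sub _ _)

lemma g_abs_bdil_snd (hk0 : k 0 = 0) (hk_nonneg : ∀ t ∈ Ici (0:ℝ), 0 ≤ k t)
    (hg_left : ∀ s ∈ Ici (0:ℝ), g (Ginv k s) = s)
    (hg_right : ∀ t ∈ Ici (0:ℝ), 0 ≤ g t ∧ Ginv k (g t) = t) {ε : ℝ} (hε : 0 ≤ ε) (p : H) :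
    g |(bdil k g ε p).2| = ε * g |p.2| := by
  rcases eq_or_ne p.2 0 with h | h
  · simp [bdil, h, g_zero hk0 hg_left]
  have hs : 0 ≤ ε * g |p.2| := mul_nonneg hε (hg_right _ (mem_Ici.2 (abs_nonneg _))).1
  have hsign : |Real.sign p.2| = 1 := by
    rcases Real.sign_apply_eq_of_ne_zero _ h with h' | h' <;> simp [h']
  rw [bdil, abs_mul, hsign, one_mul, abs_of_nonneg (Ginv_nonneg hk_nonneg hs), hg_left _ hs]

lemma rho0_bdil (hk0 : k 0 = 0) (hk_nonneg : ∀ t ∈ Ici (0:ℝ), 0 ≤ k t)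
    (hg_left : ∀ s ∈ Ici (0:ℝ), g (Ginv k s) = s)
    (hg_right : ∀ t ∈ Ici (0:ℝ), 0 ≤ g t ∧ Ginv k (g t) = t) {ε : ℝ} (hε : 0 ≤ ε) (p : H) :
    rho0 g (bdil k g ε p) = ε * rho0 g p := by
  rw [rho0, g_abs_bdil_snd hk0 hk_nonneg hg_left hg_right hε, rho0, mul_max_of_nonneg _ _ hε]
  exact congrArg (max · _) (enorm2_smul hε _ _)

end Gauge

lemma Hinv_bdil (k g : ℝ → ℝ) (ε : ℝ) (p : H) :
    Hinv (bdil k g ε p) = bdil k g ε (Hinv p) := by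
  simp only [Hinv, bdil, abs_neg, Real.sign_neg, Prod.mk.injEq]
  exact ⟨⟨by ring, by ring⟩, by ring⟩

lemma Hinv_Hmul_Hmul_cancel_left (u p q : H) :
    Hmul (Hinv (Hmul u p)) (Hmul u q) = Hmul (Hinv p) q := by
  simp only [Hmul, Hinv, omega2, Prod.mk.injEq]
  exact ⟨⟨by ring, by ring⟩, by ring⟩

lemma Hinv_Hmul_Hinv (u x : H) : Hinv (Hmul (Hinv u) x) = Hmul (Hinv x) u := by
  simp only [Hmul, Hinv, omega2, Prod.mk.injEq]
  exact ⟨⟨by ring, by ring⟩, by ring⟩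

lemma continuous_Hmul_Hinv : Continuous fun p : H × H => Hmul (Hinv p.1) p.2 := by
  unfold Hmul Hinv omega2
  fun_prop

noncomputable def betaBar (k g : ℝ → ℝ) (ε : ℝ) (x y : H) : H :=
  bdil k g ε⁻¹ (Hmul (bdil k g ε x) (bdil k g ε y))

lemma rho0_betaBar {k g : ℝ → ℝ} (hk0 : k 0 = 0) (hk_nonneg : ∀ t ∈ Ici (0:ℝ), 0 ≤ k t)
    (hg_left : ∀ s ∈ Ici (0:ℝ), g (Ginv k s) = s)
    (hg_right : ∀ t ∈ Ici (0:ℝ), 0 ≤ g t ∧ Ginv k (g t) = t) {ε : ℝ} (hε : 0 ≤ ε) (x y : H) :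
    rho0 g (betaBar k g ε (Hinv x) y) =
      ε⁻¹ * rho0 g (Hmul (Hinv (bdil k g ε x)) (bdil k g ε y)) := by
  rw [betaBar, rho0_bdil hk0 hk_nonneg hg_left hg_right (inv_nonneg.2 hε), Hinv_bdil]

theorem A4_implies_A3_general
(k g : ℝ → ℝ)
    (hk_conv : ConvexOn ℝ (Set.Ici 0) k)
    (hk_mono : StrictMonoOn k (Set.Ici 0))
    (hk0 : k 0 = 0)
    (hk_nonneg : ∀ t ∈ Set.Ici (0:ℝ), 0 ≤ k t)
    (hg_left : ∀ s ∈ Set.Ici (0:ℝ), g (Ginv k s) = s)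
    (hg_right : ∀ t ∈ Set.Ici (0:ℝ), 0 ≤ g t ∧ Ginv k (g t) = t)
    (β : H → H → H)
    (hA4 : ∀ K : Set H, IsCompact K → ∀ η : ℝ, 0 < η → ∃ ε₀ : ℝ, 0 < ε₀ ∧
      ∀ ε : ℝ, 0 < ε → ε < ε₀ → ∀ x ∈ K, ∀ y ∈ K,
        ‖bdil k g ε⁻¹ (Hmul (bdil k g ε x) (bdil k g ε y)) - β x y‖ < η) :
    ∃ L : H → H → H → ℝ, ∀ K : Set H, IsCompact K → ∀ η : ℝ, 0 < η →
      ∃ ε₀ : ℝ, 0 < ε₀ ∧ ∀ ε : ℝ, 0 < ε → ε < ε₀ → ∀ u ∈ K, ∀ x ∈ K, ∀ y ∈ K,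
        |(1 / ε) * rho0 g (Hmul
            (Hinv (Hmul u (bdil k g ε (Hmul (Hinv u) x))))
            (Hmul u (bdil k g ε (Hmul (Hinv u) y)))) - L u x y| < η := by
  refine ⟨fun u x y => rho0 g (β (Hmul (Hinv x) u) (Hmul (Hinv u) y)), fun K hK η hη => ?_⟩
  obtain ⟨δ, hδ, hd0⟩ := exists_pos_forall_norm_lt_d0_lt hη
  set K' := (fun p : H × H => Hmul (Hinv p.1) p.2) '' (K ×ˢ K)
  obtain ⟨ε₀, hε₀, hA⟩ := hA4 K' ((hK.prod hK).image continuous_Hmul_Hinv) δ hδ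
  refine ⟨ε₀, hε₀, fun ε hε hεε₀ u hu x hx y hy => ?_⟩
  have hxu : Hmul (Hinv x) u ∈ K' := ⟨(x, u), ⟨hx, hu⟩, rfl⟩
  have huy : Hmul (Hinv u) y ∈ K' := ⟨(u, y), ⟨hu, hy⟩, rfl⟩
  rw [Hinv_Hmul_Hmul_cancel_left, one_div,
    ← rho0_betaBar hk0 hk_nonneg hg_left hg_right hε.le, Hinv_Hmul_Hinv]
  exact (abs_rho0_sub_rho0_le_d0 hk_conv hk_mono hk0 hk_nonneg hg_left hg_right _ _).trans_lt
    (hd0 _ (hA ε hε hεε₀ _ hxu _ huy))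

/-- for (H(1),ρ,δ̄), axiom A4 (uniform convergence on compacts of
β̄_ε(x,y) = δ̄_{ε⁻¹}(δ̄_ε(x)·δ̄_ε(y))) implies axiom A3 (uniform convergence on
compacts of (1/ε)·ρ(δ̄^u_ε x, δ̄^u_ε y)). -/
theorem A4_implies_A3
(k g : ℝ → ℝ)
    (hk_conv : ConvexOn ℝ (Set.Ici 0) k)
    (hk_mono : StrictMonoOn k (Set.Ici 0))
    (hk_cont : ContinuousOn k (Set.Ici 0))
    (hk0 : k 0 = 0)
    (hk_nonneg : ∀ t ∈ Set.Ici (0:ℝ), 0 ≤ k t)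
    (hg_left : ∀ s ∈ Set.Ici (0:ℝ), g (Ginv k s) = s)
    (hg_right : ∀ t ∈ Set.Ici (0:ℝ), 0 ≤ g t ∧ Ginv k (g t) = t)
    (β : H → H → H)
    (hA4 : ∀ K : Set H, IsCompact K → ∀ η : ℝ, 0 < η → ∃ ε₀ : ℝ, 0 < ε₀ ∧
      ∀ ε : ℝ, 0 < ε → ε < ε₀ → ∀ x ∈ K, ∀ y ∈ K,
        ‖bdil k g ε⁻¹ (Hmul (bdil k g ε x) (bdil k g ε y)) - β x y‖ < η) :
    ∃ L : H → H → H → ℝ, ∀ K : Set H, IsCompact K → ∀ η : ℝ, 0 < η →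
      ∃ ε₀ : ℝ, 0 < ε₀ ∧ ∀ ε : ℝ, 0 < ε → ε < ε₀ → ∀ u ∈ K, ∀ x ∈ K, ∀ y ∈ K,
        |(1 / ε) * rho0 g (Hmul
            (Hinv (Hmul u (bdil k g ε (Hmul (Hinv u) x))))
            (Hmul u (bdil k g ε (Hmul (Hinv u) y)))) - L u x y| < η :=
  A4_implies_A3_general k g hk_conv hk_mono hk0 hk_nonneg hg_left hg_right β hA4
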